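/- arXiv:1204.5672 — 2 statements merged into one kernel-verified Lean document; each statement's English description precedes it below -/
import Mathlib

section
/- Let M be a Garside monoid, let Δ be a Garside element of M, and let N be a parabolic submonoid of M. Then N has a Garside element (so N is a Garside monoid); moreover, there exists a Garside element Δ_N of N such that Div(Δ_N) = Div(Δ) ∩ N. -/
namespace PG

variable {M : Type*} [Monoid M]

/-- `LDvd a b` : `a` left-divides `b`. -/
def LDvd (a b : M) : Prop := ∃ c, b = a * c

/-- `RDvd a b` : `a` right-divides `b`. -/
def RDvd (a b : M) : Prop := ∃ c, b = c * a

/-- A monoid is cancellative if `c * a * d = c * b * d` implies `a = b`. -/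
def IsCancellative (M : Type*) [Monoid M] : Prop :=
  ∀ a b c d : M, c * a * d = c * b * d → a = b

/-- A monoid is atomic if it admits a norm `ν : M → ℕ` with `ν a > 0` for `a ≠ 1`
and `ν (a * b) ≥ ν a + ν b`. -/
def IsAtomicMon (M : Type*) [Monoid M] : Prop :=
  ∃ ν : M → ℕ, (∀ a : M, a ≠ 1 → 0 < ν a) ∧ ∀ a b : M, ν a + ν b ≤ ν (a * b)

/-- `m` is the least common multiple of `a` and `b` for left-divisibility. -/
def IsLcmL (a b m : M) : Prop :=
  LDvd a m ∧ LDvd b m ∧ ∀ c : M, LDvd a c → LDvd b c → LDvd m c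

/-- `m` is the least common multiple of `a` and `b` for right-divisibility. -/
def IsLcmR (a b m : M) : Prop :=
  RDvd a m ∧ RDvd b m ∧ ∀ c : M, RDvd a c → RDvd b c → RDvd m c

/-- `d` is the greatest common left-divisor of `a` and `b`. -/
def IsGcdL (a b d : M) : Prop :=
  LDvd d a ∧ LDvd d b ∧ ∀ c : M, LDvd c a → LDvd c b → LDvd c d

/-- `d` is the greatest common right-divisor of `a` and `b`. -/
def IsGcdR (a b d : M) : Prop :=
  RDvd d a ∧ RDvd d b ∧ ∀ c : M, RDvd c a → RDvd c b → RDvd c d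

/-- A preGarside monoid: cancellative, atomic, and any two elements admitting a
common multiple (on the appropriate side) admit a least one. -/
def IsPreGarside (M : Type*) [Monoid M] : Prop :=
  IsCancellative M ∧ IsAtomicMon M ∧
    (∀ a b : M, (∃ c, LDvd a c ∧ LDvd b c) → ∃ m, IsLcmL a b m) ∧
    (∀ a b : M, (∃ c, RDvd a c ∧ RDvd b c) → ∃ m, IsLcmR a b m)

/-- A submonoid is special if it is closed under factors. -/
def IsSpecial (N : Submonoid M) : Prop := ∀ a b : M, a * b ∈ N → a ∈ N ∧ b ∈ N

/-- A (standard) parabolic submonoid: special and closed under all existing lcms. -/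
def IsParabolic (N : Submonoid M) : Prop :=
  IsSpecial N ∧ (∀ a b m : M, a ∈ N → b ∈ N → IsLcmL a b m → m ∈ N) ∧
    ∀ a b m : M, a ∈ N → b ∈ N → IsLcmR a b m → m ∈ N

/-- `b` is a factor of `a`. -/
def Factor (b a : M) : Prop := ∃ c d : M, a = c * b * d

/-- The set of factors of `a`. -/
def Factors (a : M) : Set M := {b | Factor b a}

/-- An element is balanced when its left-divisors and right-divisors coincide. -/
def IsBalanced (a : M) : Prop := {b : M | LDvd b a} = {b : M | RDvd b a}

/-- A Garside element: balanced, and its factors generate the monoid. -/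
def IsGarsideElt (Δ : M) : Prop := IsBalanced Δ ∧ Submonoid.closure (Factors Δ) = ⊤

/-- A Garside monoid: a preGarside monoid possessing a Garside element. -/
def IsGarside (M : Type*) [Monoid M] : Prop := IsPreGarside M ∧ ∃ Δ : M, IsGarsideElt Δ

/-- The factors of `a` computed inside the submonoid `N`. -/
def FactorsIn (N : Submonoid M) (a : M) : Set M :=
  {b | b ∈ N ∧ ∃ c ∈ N, ∃ d ∈ N, a = c * b * d}

/-- `Δ` is a Garside element of the submonoid `N`: it is balanced in `N` and its
factors in `N` generate `N`. -/
def IsGarsideEltIn (N : Submonoid M) (Δ : M) : Prop :=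
  Δ ∈ N ∧ ({b : M | b ∈ N ∧ ∃ c ∈ N, Δ = b * c} = {b : M | b ∈ N ∧ ∃ c ∈ N, Δ = c * b}) ∧
    Submonoid.closure (FactorsIn N Δ) = N

/-- The right coset `g * N` (an `R_N`-class). -/
def RCoset (N : Submonoid M) (g : M) : Set M := {x | ∃ h ∈ N, x = g * h}

/-- The left coset `N * g` (an `L_N`-class). -/
def LCoset (N : Submonoid M) (g : M) : Set M := {x | ∃ h ∈ N, x = h * g}

/-- `RReduces N B A` : the `R_N`-class `B` reduces in one step to the `R_N`-class `A`,
i.e. `A = g₁ N`, `B = g₂ N` with `g₂ ∈ g₁ N` and `g₁ ∉ g₂ N`. -/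
def RReduces (N : Submonoid M) (B A : Set M) : Prop :=
  ∃ g₁ g₂ : M, A = RCoset N g₁ ∧ B = RCoset N g₂ ∧ g₂ ∈ RCoset N g₁ ∧ g₁ ∉ RCoset N g₂

/-- `LReduces N B A` : the `L_N`-class `B` reduces in one step to the `L_N`-class `A`. -/
def LReduces (N : Submonoid M) (B A : Set M) : Prop :=
  ∃ g₁ g₂ : M, A = LCoset N g₁ ∧ B = LCoset N g₂ ∧ g₂ ∈ LCoset N g₁ ∧ g₁ ∉ LCoset N g₂

/-- `N` has the `R` confluence property: the reduction rule on `R_N`-classes is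
Noetherian and locally confluent. -/
def RConfluence (N : Submonoid M) : Prop :=
  (¬ ∃ f : ℕ → Set M, ∀ n : ℕ, RReduces N (f n) (f (n + 1))) ∧
    ∀ C A B : Set M, RReduces N C A → RReduces N C B →
      ∃ D : Set M, Relation.ReflTransGen (RReduces N) A D ∧
        Relation.ReflTransGen (RReduces N) B D

/-- `N` has the `L` confluence property. -/
def LConfluence (N : Submonoid M) : Prop :=
  (¬ ∃ f : ℕ → Set M, ∀ n : ℕ, LReduces N (f n) (f (n + 1))) ∧
    ∀ C A B : Set M, LReduces N C A → LReduces N C B →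
      ∃ D : Set M, Relation.ReflTransGen (LReduces N) A D ∧
        Relation.ReflTransGen (LReduces N) B D

/-- `N` has the confluence property. -/
def Confluence (N : Submonoid M) : Prop := RConfluence N ∧ LConfluence N

/-- The `R_N`-class `C` is minimal: whenever `g` represents `C` and `g = g' * h` with
`h ∈ N`, one has `g' N = C`. -/
def IsMinimalRCoset (N : Submonoid M) (C : Set M) : Prop :=
  (∃ g : M, C = RCoset N g) ∧
    ∀ g g' h : M, h ∈ N → C = RCoset N g → g = g' * h → RCoset N g' = C

/-- The `L_N`-class `C` is minimal. -/
def IsMinimalLCoset (N : Submonoid M) (C : Set M) : Prop :=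
  (∃ g : M, C = LCoset N g) ∧
    ∀ g g' h : M, h ∈ N → C = LCoset N g → g = h * g' → LCoset N g' = C

/-- The set of atoms of `M`. -/
def AtomSet (M : Type*) [Monoid M] : Set M :=
  {a | a ≠ 1 ∧ ∀ b c : M, a = b * c → b = 1 ∨ c = 1}

/-- `|x|` : the least number of factors of `Δ` needed to write `x` as a product. -/
noncomputable def lenFactors (Δ x : M) : ℕ :=
  sInf {k | ∃ l : List M, l.length = k ∧ (∀ y ∈ l, y ∈ Factors Δ) ∧ l.prod = x}

section Amalgam

variable {M₁ M₂ N : Type*} [Monoid M₁] [Monoid M₂] [Monoid N]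

/-- The congruence on the free product `M₁ ∗ M₂` identifying `ι₁ h` with `ι₂ h`
for every `h ∈ N`. -/
def amalgamCon (ι₁ : N →* M₁) (ι₂ : N →* M₂) : Con (Monoid.Coprod M₁ M₂) :=
  conGen fun a b => ∃ h : N, a = Monoid.Coprod.inl (ι₁ h) ∧ b = Monoid.Coprod.inr (ι₂ h)

/-- The amalgamated product `M₁ *_N M₂` : the pushout of `ι₁ : N →* M₁` and
`ι₂ : N →* M₂` in the category of monoids. -/
def Amalgam (ι₁ : N →* M₁) (ι₂ : N →* M₂) : Type _ := (amalgamCon ι₁ ι₂).Quotient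

instance (ι₁ : N →* M₁) (ι₂ : N →* M₂) : Monoid (Amalgam ι₁ ι₂) :=
  inferInstanceAs (Monoid (amalgamCon ι₁ ι₂).Quotient)

/-- The canonical morphism `M₁ →* M₁ *_N M₂`. -/
def amalgamInl (ι₁ : N →* M₁) (ι₂ : N →* M₂) : M₁ →* Amalgam ι₁ ι₂ :=
  (amalgamCon ι₁ ι₂).mk'.comp Monoid.Coprod.inl

/-- The canonical morphism `M₂ →* M₁ *_N M₂`. -/
def amalgamInr (ι₁ : N →* M₁) (ι₂ : N →* M₂) : M₂ →* Amalgam ι₁ ι₂ :=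
  (amalgamCon ι₁ ι₂).mk'.comp Monoid.Coprod.inr

end Amalgam

/-! Among the left divisors of `Δ` lying in `N`, whose norms are bounded by that of `Δ`, one of
maximal norm is greatest: its lcm with any other one again lies in `N` and divides `Δ`, so it is
not a proper multiple of it. The same holds on the right, and as `Δ` is balanced the two extremal
elements divide each other, hence coincide. This `Δ_N` is balanced, its factors are those of `Δ`
lying in `N`, and these generate `N` because `N` is special. -/

lemma LDvd.trans {a b c : M} (hab : LDvd a b) (hbc : LDvd b c) : LDvd a c := by
  obtain ⟨x, rfl⟩ := hab
  obtain ⟨y, rfl⟩ := hbc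
  exact ⟨x * y, mul_assoc a x y⟩

lemma RDvd.trans {a b c : M} (hab : RDvd a b) (hbc : RDvd b c) : RDvd a c := by
  obtain ⟨x, rfl⟩ := hab
  obtain ⟨y, rfl⟩ := hbc
  exact ⟨y * x, (mul_assoc y x a).symm⟩

lemma isBalanced_iff {a : M} : IsBalanced a ↔ ∀ b, LDvd b a ↔ RDvd b a := Set.ext_iff

lemma IsBalanced.factors_eq {a : M} (ha : IsBalanced a) : Factors a = {b | LDvd b a} := by
  ext b
  refine ⟨fun ⟨c, d, hcd⟩ => ?_, fun ⟨d, hd⟩ => ⟨1, d, by rw [one_mul, hd]⟩⟩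
  obtain ⟨e, he⟩ := (isBalanced_iff.mp ha (b * d)).mpr ⟨c, by rw [hcd, mul_assoc]⟩
  exact ⟨d * e, by rw [he, mul_assoc]⟩

def IsAtomicNorm (ν : M → ℕ) : Prop :=
  (∀ a : M, a ≠ 1 → 0 < ν a) ∧ ∀ a b : M, ν a + ν b ≤ ν (a * b)

namespace IsAtomicNorm

variable {ν : M → ℕ} (hν : IsAtomicNorm ν)
include hν

lemma le_of_ldvd {a b : M} (h : LDvd a b) : ν a ≤ ν b := by
  obtain ⟨c, rfl⟩ := h
  exact (Nat.le_add_right _ _).trans (hν.2 a c)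

lemma le_of_rdvd {a b : M} (h : RDvd a b) : ν a ≤ ν b := by
  obtain ⟨c, rfl⟩ := h
  exact (Nat.le_add_left _ _).trans (hν.2 c a)

lemma eq_one_of_mul_right_le {a c : M} (h : ν (a * c) ≤ ν a) : c = 1 := by
  by_contra hc
  have := hν.1 c hc
  have := hν.2 a c
  omega

lemma eq_one_of_mul_left_le {a c : M} (h : ν (c * a) ≤ ν a) : c = 1 := by
  by_contra hc
  have := hν.1 c hc
  have := hν.2 c a
  omega

lemma eq_of_ldvd_of_rdvd {a b : M} (hab : LDvd a b) (hba : RDvd b a) : a = b := by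
  obtain ⟨c, rfl⟩ := hab
  obtain ⟨e, he⟩ := hba
  have hc : c = 1 := hν.eq_one_of_mul_right_le (a := e * a) <| by
    rw [mul_assoc, ← he]
    exact hν.le_of_rdvd ⟨e, rfl⟩
  rw [hc, mul_one]

end IsAtomicNorm

lemma exists_max_image_of_le {α : Type*} {ν : α → ℕ} {S : Set α} (hS : S.Nonempty) {B : ℕ}
    (hB : ∀ d ∈ S, ν d ≤ B) : ∃ g ∈ S, ∀ d ∈ S, ν d ≤ ν g := by
  obtain ⟨-, ⟨g, hg, rfl⟩, hmax⟩ :=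
    BddAbove.exists_isGreatest_of_nonempty (S := ν '' S)
      ⟨B, Set.forall_mem_image.mpr hB⟩ (hS.image ν)
  exact ⟨g, hg, Set.forall_mem_image.mp hmax⟩

section Greatest

variable (hM : IsAtomicMon M) {N : Submonoid M} (Δ : M)
include hM

lemma exists_greatest_ldvd_mem
    (hlcm : ∀ a b : M, (∃ c, LDvd a c ∧ LDvd b c) → ∃ m, IsLcmL a b m)
    (hN : ∀ a b m : M, a ∈ N → b ∈ N → IsLcmL a b m → m ∈ N) :
    ∃ g ∈ N, LDvd g Δ ∧ ∀ d ∈ N, LDvd d Δ → LDvd d g := by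
  obtain ⟨ν, hν⟩ := hM
  obtain ⟨g, ⟨hgN, hgΔ⟩, hmax⟩ := exists_max_image_of_le (ν := ν)
    (S := {d | d ∈ N ∧ LDvd d Δ}) ⟨1, N.one_mem, Δ, (one_mul Δ).symm⟩
    (fun d hd => IsAtomicNorm.le_of_ldvd hν hd.2)
  refine ⟨g, hgN, hgΔ, fun d hdN hdΔ => ?_⟩
  obtain ⟨m, hdm, ⟨c, rfl⟩, hm⟩ := hlcm d g ⟨Δ, hdΔ, hgΔ⟩
  have hc : c = 1 := IsAtomicNorm.eq_one_of_mul_right_le hν <|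
    hmax _ ⟨hN d g _ hdN hgN ⟨hdm, ⟨c, rfl⟩, hm⟩, hm Δ hdΔ hgΔ⟩
  rwa [hc, mul_one] at hdm

lemma exists_greatest_rdvd_mem
    (hlcm : ∀ a b : M, (∃ c, RDvd a c ∧ RDvd b c) → ∃ m, IsLcmR a b m)
    (hN : ∀ a b m : M, a ∈ N → b ∈ N → IsLcmR a b m → m ∈ N) :
    ∃ g ∈ N, RDvd g Δ ∧ ∀ d ∈ N, RDvd d Δ → RDvd d g := by
  obtain ⟨ν, hν⟩ := hM
  obtain ⟨g, ⟨hgN, hgΔ⟩, hmax⟩ := exists_max_image_of_le (ν := ν)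
    (S := {d | d ∈ N ∧ RDvd d Δ}) ⟨1, N.one_mem, Δ, (mul_one Δ).symm⟩
    (fun d hd => IsAtomicNorm.le_of_rdvd hν hd.2)
  refine ⟨g, hgN, hgΔ, fun d hdN hdΔ => ?_⟩
  obtain ⟨m, hdm, ⟨c, rfl⟩, hm⟩ := hlcm d g ⟨Δ, hdΔ, hgΔ⟩
  have hc : c = 1 := IsAtomicNorm.eq_one_of_mul_left_le hν <|
    hmax _ ⟨hN d g _ hdN hgN ⟨hdm, ⟨c, rfl⟩, hm⟩, hm Δ hdΔ hgΔ⟩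
  rwa [hc, one_mul] at hdm

end Greatest

lemma IsParabolic.exists_divisors_eq_inter {N : Submonoid M} {Δ : M} (hM : IsPreGarside M)
    (hΔ : IsBalanced Δ) (hN : IsParabolic N) :
    ∃ ΔN ∈ N, (∀ b, LDvd b ΔN ↔ b ∈ N ∧ LDvd b Δ) ∧ ∀ b, RDvd b ΔN ↔ b ∈ N ∧ RDvd b Δ := by
  obtain ⟨-, hatom, hlcmL, hlcmR⟩ := hM
  obtain ⟨hspec, hNL, hNR⟩ := hN
  obtain ⟨g, hgN, hgΔ, hgmax⟩ := exists_greatest_ldvd_mem hatom Δ hlcmL hNL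
  obtain ⟨g', hg'N, hg'Δ, hg'max⟩ := exists_greatest_rdvd_mem hatom Δ hlcmR hNR
  have hbal := isBalanced_iff.mp hΔ
  obtain ⟨ν, hν⟩ := hatom
  have hg' : g' = g := IsAtomicNorm.eq_of_ldvd_of_rdvd hν
    (hgmax g' hg'N ((hbal g').mpr hg'Δ)) (hg'max g hgN ((hbal g).mp hgΔ))
  subst hg'
  refine ⟨g', hgN, fun b => ⟨fun hb => ?_, fun hb => hgmax b hb.1 hb.2⟩,
    fun b => ⟨fun hb => ?_, fun hb => hg'max b hb.1 hb.2⟩⟩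
  · obtain ⟨c, hc⟩ := hb
    exact ⟨(hspec b c (hc ▸ hgN)).1, LDvd.trans ⟨c, hc⟩ hgΔ⟩
  · obtain ⟨c, hc⟩ := hb
    exact ⟨(hspec c b (hc ▸ hgN)).2, RDvd.trans ⟨c, hc⟩ hg'Δ⟩

section Special

variable {N : Submonoid M} (hN : IsSpecial N)
include hN

lemma factorsIn_eq_factors_inter {a : M} (ha : a ∈ N) : FactorsIn N a = Factors a ∩ N := by
  ext b
  refine ⟨fun ⟨hb, c, _, d, _, h⟩ => ⟨⟨c, d, h⟩, hb⟩, fun ⟨⟨c, d, h⟩, hb⟩ => ?_⟩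
  obtain ⟨hcb, hd⟩ := hN (c * b) d (h ▸ ha)
  exact ⟨hb, c, (hN c b hcb).1, d, hd, h⟩

lemma closure_inter_eq_of_closure_eq_top {S : Set M} (hS : Submonoid.closure S = ⊤) :
    Submonoid.closure (S ∩ N) = N := by
  refine le_antisymm (Submonoid.closure_le.mpr Set.inter_subset_right) fun x hx => ?_
  have hxS : x ∈ Submonoid.closure S := hS ▸ Submonoid.mem_top x
  induction hxS using Submonoid.closure_induction with
  | mem y hy => exact Submonoid.subset_closure ⟨hy, hx⟩
  | one => exact Submonoid.one_mem _
  | mul y z _ _ hy hz =>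
    obtain ⟨hyN, hzN⟩ := hN y z hx
    exact mul_mem (hy hyN) (hz hzN)

lemma ldvd_coe_iff {a b : N} : LDvd (a : M) b ↔ LDvd a b :=
  ⟨fun ⟨c, hc⟩ => ⟨⟨c, (hN a c (hc ▸ b.2)).2⟩, Subtype.ext hc⟩,
    fun ⟨c, hc⟩ => ⟨c, congrArg Subtype.val hc⟩⟩

lemma rdvd_coe_iff {a b : N} : RDvd (a : M) b ↔ RDvd a b :=
  ⟨fun ⟨c, hc⟩ => ⟨⟨c, (hN c a (hc ▸ b.2)).1⟩, Subtype.ext hc⟩,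
    fun ⟨c, hc⟩ => ⟨c, congrArg Subtype.val hc⟩⟩

lemma IsLcmL.of_coe {a b m : N} (h : IsLcmL (a : M) b m) : IsLcmL a b m := by
  obtain ⟨ham, hbm, hmin⟩ := h
  exact ⟨(ldvd_coe_iff hN).mp ham, (ldvd_coe_iff hN).mp hbm, fun c hac hbc =>
    (ldvd_coe_iff hN).mp (hmin c ((ldvd_coe_iff hN).mpr hac) ((ldvd_coe_iff hN).mpr hbc))⟩

lemma IsLcmR.of_coe {a b m : N} (h : IsLcmR (a : M) b m) : IsLcmR a b m := by
  obtain ⟨ham, hbm, hmin⟩ := h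
  exact ⟨(rdvd_coe_iff hN).mp ham, (rdvd_coe_iff hN).mp hbm, fun c hac hbc =>
    (rdvd_coe_iff hN).mp (hmin c ((rdvd_coe_iff hN).mpr hac) ((rdvd_coe_iff hN).mpr hbc))⟩

lemma isBalanced_mk {a : M} (ha : a ∈ N) (hbal : IsBalanced a) :
    IsBalanced (⟨a, ha⟩ : N) := by
  ext b
  show LDvd b _ ↔ RDvd b _
  exact (ldvd_coe_iff hN (b := ⟨a, ha⟩)).symm.trans
    ((isBalanced_iff.mp hbal b).trans (rdvd_coe_iff hN (b := ⟨a, ha⟩)))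

lemma isGarsideEltIn_of_isBalanced {a : M} (ha : a ∈ N) (hbal : IsBalanced a)
    (hgen : Submonoid.closure (FactorsIn N a) = N) : IsGarsideEltIn N a := by
  refine ⟨ha, ?_, hgen⟩
  ext b
  refine ⟨fun ⟨hb, c, _, hc⟩ => ?_, fun ⟨hb, c, _, hc⟩ => ?_⟩
  · obtain ⟨d, hd⟩ := (isBalanced_iff.mp hbal b).mp ⟨c, hc⟩
    exact ⟨hb, d, (hN d b (hd ▸ ha)).1, hd⟩
  · obtain ⟨d, hd⟩ := (isBalanced_iff.mp hbal b).mpr ⟨c, hc⟩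
    exact ⟨hb, d, (hN b d (hd ▸ ha)).2, hd⟩

end Special

lemma IsPreGarside.of_isParabolic {N : Submonoid M} (hM : IsPreGarside M) (hN : IsParabolic N) :
    IsPreGarside N := by
  obtain ⟨hcan, ⟨ν, hpos, hadd⟩, hlcmL, hlcmR⟩ := hM
  obtain ⟨hspec, hNL, hNR⟩ := hN
  refine ⟨fun a b c d h => Subtype.ext (hcan a b c d (congrArg Subtype.val h)),
    ⟨fun a => ν a, fun a ha => hpos a fun h => ha (Subtype.ext h), fun a b => hadd a b⟩, ?_, ?_⟩
  · rintro a b ⟨c, hac, hbc⟩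
    obtain ⟨m, hm⟩ := hlcmL a b
      ⟨c, (ldvd_coe_iff hspec).mpr hac, (ldvd_coe_iff hspec).mpr hbc⟩
    exact ⟨⟨m, hNL a b m a.2 b.2 hm⟩, IsLcmL.of_coe hspec hm⟩
  · rintro a b ⟨c, hac, hbc⟩
    obtain ⟨m, hm⟩ := hlcmR a b
      ⟨c, (rdvd_coe_iff hspec).mpr hac, (rdvd_coe_iff hspec).mpr hbc⟩
    exact ⟨⟨m, hNR a b m a.2 b.2 hm⟩, IsLcmR.of_coe hspec hm⟩

lemma factors_mk {N : Submonoid M} {a : M} (ha : a ∈ N) :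
    Factors (⟨a, ha⟩ : N) = (↑) ⁻¹' FactorsIn N a := by
  ext b
  refine ⟨fun ⟨c, d, h⟩ => ⟨b.2, c, c.2, d, d.2, congrArg Subtype.val h⟩,
    fun ⟨_, c, hc, d, hd, h⟩ => ⟨⟨c, hc⟩, ⟨d, hd⟩, Subtype.ext h⟩⟩

lemma closure_coe_preimage_eq_top {N : Submonoid M} {S : Set M}
    (hS : Submonoid.closure S = N) : Submonoid.closure ((↑) ⁻¹' S : Set N) = ⊤ := by
  subst hS
  exact Submonoid.closure_closure_coe_preimage

/-- **Lemma 2.4 (1).** A parabolic submonoid `N` of a Garside monoid `M` with Garside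
element `Δ` is a Garside monoid; moreover `N` has a Garside element `Δ_N` whose set of
factors is `Div Δ ∩ N`. -/
theorem lemma_2_4 {M : Type*} [Monoid M] (hM : IsPreGarside M) (Δ : M)
    (hΔ : IsGarsideElt Δ) (N : Submonoid M) (hN : IsParabolic N) :
    IsGarside ↥N ∧
    ∃ ΔN : M, IsGarsideEltIn N ΔN ∧ FactorsIn N ΔN = Factors Δ ∩ (N : Set M) := by
  obtain ⟨ΔN, hΔN, hL, hR⟩ := hN.exists_divisors_eq_inter hM hΔ.1
  have hbal : IsBalanced ΔN := isBalanced_iff.mpr fun b => by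
    rw [hL, hR, isBalanced_iff.mp hΔ.1]
  have hfac : FactorsIn N ΔN = Factors Δ ∩ N := by
    ext b
    rw [factorsIn_eq_factors_inter hN.1 hΔN, hbal.factors_eq, hΔ.1.factors_eq]
    simp only [Set.mem_inter_iff, Set.mem_ofPred_eq, hL]
    tauto
  have hgen : Submonoid.closure (FactorsIn N ΔN) = N :=
    hfac ▸ closure_inter_eq_of_closure_eq_top hN.1 hΔ.2
  refine ⟨⟨hM.of_isParabolic hN, ⟨ΔN, hΔN⟩, isBalanced_mk hN.1 hΔN hbal, ?_⟩,
    ΔN, isGarsideEltIn_of_isBalanced hN.1 hΔN hbal hgen, hfac⟩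
  rw [factors_mk]
  exact closure_coe_preimage_eq_top hgen

end PG
end

section
/- Let M1 *_N M2 be a special amalgam such that M1 and M2 are cancellative and N has the confluence property in both M1 and M2. For i = 1,2, let T_i be a set of representatives, containing 1, of the minimal R_N-classes in M_i. Then every element g of M1 *_N M2 has a unique decomposition g = g1 g2 ⋯ gm h such that h ∈ N, each g_i belongs to either T1 \ {1} or T2 \ {1}, and no two consecutive g_i lie in the same set T_j. -/
namespace PG

variable {M : Type*} [Monoid M]

/-!
The reduction of `R_N`-classes is strict inclusion of cosets. Noetherianity puts every coset
`g N` below a maximal one, and local confluence makes that maximal coset unique, so every `g ∈ Mᵢ`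
is uniquely `t * h` with `t ∈ Tᵢ`, `h ∈ N`. This lets `M₁` and `M₂` act on pairs
(normal word, element of `N`): a letter `a` absorbs the leading letter `t` of its own side by
`a * t = t' * h`, and `h` is handed on to the rest of the word through the other factor.
Specialness keeps `t' ≠ 1` whenever `t ≠ 1`, so words stay alternating. The two actions agree
on `N`, hence the amalgam acts; the image of the empty normal form under `g` is a normal form of
`g`, and each normal form is the image of the empty one under its own product, whence uniqueness.
-/

section RCoset

variable {M : Type*} [Monoid M] {S : Submonoid M} {g g' t t' : M}

variable (S) in
theorem mem_rCoset_self (g : M) : g ∈ RCoset S g :=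
  ⟨1, S.one_mem, (mul_one g).symm⟩

theorem rCoset_subset_rCoset_iff : RCoset S g ⊆ RCoset S g' ↔ g ∈ RCoset S g' := by
  refine ⟨fun h => h (mem_rCoset_self S g), ?_⟩
  rintro ⟨h, hh, rfl⟩ _ ⟨k, hk, rfl⟩
  exact ⟨h * k, S.mul_mem hh hk, mul_assoc _ _ _⟩

theorem rReduces_rCoset_iff {A : Set M} :
    RReduces S (RCoset S g) A ↔ ∃ g', A = RCoset S g' ∧ RCoset S g ⊂ RCoset S g' := by
  constructor
  · rintro ⟨g₁, g₂, rfl, hg, hmem, hnmem⟩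
    rw [hg]
    exact ⟨g₁, rfl, rCoset_subset_rCoset_iff.2 hmem, fun h => hnmem (rCoset_subset_rCoset_iff.1 h)⟩
  · rintro ⟨g', rfl, hsub, hnsub⟩
    exact ⟨g', g, rfl, rfl, rCoset_subset_rCoset_iff.1 hsub,
      fun h => hnsub (rCoset_subset_rCoset_iff.2 h)⟩

theorem reflTransGen_rReduces_rCoset {A : Set M}
    (h : Relation.ReflTransGen (RReduces S) (RCoset S g) A) :
    ∃ g', A = RCoset S g' ∧ RCoset S g ⊆ A := by
  induction h with
  | refl => exact ⟨g, rfl, subset_rfl⟩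
  | tail _ hstep ih =>
    obtain ⟨g', rfl, hsub⟩ := ih
    obtain ⟨g'', rfl, hlt⟩ := rReduces_rCoset_iff.1 hstep
    exact ⟨g'', rfl, hsub.trans hlt.subset⟩

theorem isMinimalRCoset_rCoset_iff :
    IsMinimalRCoset S (RCoset S t) ↔ ∀ g, RCoset S t ⊆ RCoset S g → RCoset S g = RCoset S t := by
  refine ⟨fun ht g hsub => ?_, fun ht => ⟨⟨t, rfl⟩, ?_⟩⟩
  · obtain ⟨h, hh, htg⟩ := rCoset_subset_rCoset_iff.1 hsub
    exact ht.2 t g h hh rfl htg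
  · rintro g₀ g h hh hC rfl
    exact ht g (hC ▸ rCoset_subset_rCoset_iff.2 ⟨h, hh, rfl⟩)

theorem exists_isMinimalRCoset_superset (hconf : RConfluence S) (g : M) :
    ∃ t, RCoset S g ⊆ RCoset S t ∧ IsMinimalRCoset S (RCoset S t) := by
  have hwf : WellFounded (flip (RReduces S)) :=
    wellFounded_iff_isEmpty_descending_chain.2 ⟨fun ⟨f, hf⟩ => hconf.1 ⟨f, hf⟩⟩
  obtain ⟨_, ⟨t, rfl, hgt⟩, hmax⟩ :=
    hwf.has_min {A | ∃ t, A = RCoset S t ∧ RCoset S g ⊆ A} ⟨_, g, rfl, subset_rfl⟩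
  refine ⟨t, hgt, isMinimalRCoset_rCoset_iff.2 fun u htu => ?_⟩
  by_contra hne
  exact hmax _ ⟨u, rfl, hgt.trans htu⟩
    (rReduces_rCoset_iff.2 ⟨u, rfl, Set.ssubset_iff_subset_ne.2 ⟨htu, Ne.symm hne⟩⟩)

theorem rCoset_eq_of_isMinimalRCoset (hconf : RConfluence S)
    (ht : IsMinimalRCoset S (RCoset S t)) (ht' : IsMinimalRCoset S (RCoset S t'))
    (hgt : g ∈ RCoset S t) (hgt' : g ∈ RCoset S t') : RCoset S t = RCoset S t' := by
  rw [isMinimalRCoset_rCoset_iff] at ht ht'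
  rw [← rCoset_subset_rCoset_iff] at hgt hgt'
  by_cases heq : RCoset S g = RCoset S t
  · exact (ht t' (heq ▸ hgt')).symm
  by_cases heq' : RCoset S g = RCoset S t'
  · exact ht' t (heq' ▸ hgt)
  obtain ⟨D, hD, hD'⟩ := hconf.2 _ _ _
    (rReduces_rCoset_iff.2 ⟨t, rfl, hgt, fun h => heq (hgt.antisymm h)⟩)
    (rReduces_rCoset_iff.2 ⟨t', rfl, hgt', fun h => heq' (hgt'.antisymm h)⟩)
  obtain ⟨d, rfl, htd⟩ := reflTransGen_rReduces_rCoset hD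
  obtain ⟨d', hdd', htd'⟩ := reflTransGen_rReduces_rCoset hD'
  rw [← ht d htd, hdd', ht' d' (hdd' ▸ htd')]

end RCoset

section Transversal

variable {M N : Type*} [Monoid M] [Monoid N]

structure IsRightTransversal (ι : N →* M) (T : Set M) : Prop where
  one_mem : (1 : M) ∈ T
  bijective : Function.Bijective fun p : T × N => (p.1 : M) * ι p.2

theorem isRightTransversal_of_rConfluence {ι : N →* M} {T : Set M}
    (hι : Function.Injective ι) (hc : IsCancellative M) (hconf : RConfluence (MonoidHom.mrange ι))
    (h1 : (1 : M) ∈ T)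
    (hmin : ∀ t ∈ T, IsMinimalRCoset (MonoidHom.mrange ι) (RCoset (MonoidHom.mrange ι) t))
    (hrep : ∀ C : Set M, IsMinimalRCoset (MonoidHom.mrange ι) C →
      ∃! t : M, t ∈ T ∧ RCoset (MonoidHom.mrange ι) t = C) :
    IsRightTransversal ι T := by
  refine ⟨h1, ?_, fun g => ?_⟩
  · rintro ⟨⟨t, ht⟩, n⟩ ⟨⟨t', ht'⟩, n'⟩ (heq : t * ι n = t' * ι n')
    have hcoset : RCoset _ t = RCoset _ t' := rCoset_eq_of_isMinimalRCoset hconf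
      (hmin t ht) (hmin t' ht') ⟨ι n, ⟨n, rfl⟩, rfl⟩ ⟨ι n', ⟨n', rfl⟩, heq⟩
    obtain rfl : t = t' := (hrep _ (hmin t ht)).unique ⟨ht, rfl⟩ ⟨ht', hcoset.symm⟩
    have : ι n = ι n' := hc _ _ t 1 (by simpa only [mul_one] using heq)
    rw [hι this]
  · obtain ⟨u, hgu, hu⟩ := exists_isMinimalRCoset_superset hconf g
    obtain ⟨t, ⟨ht, htu⟩, -⟩ := hrep _ hu
    obtain ⟨_, ⟨n, rfl⟩, hg⟩ := rCoset_subset_rCoset_iff.1 (htu ▸ hgu)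
    exact ⟨(⟨t, ht⟩, n), hg.symm⟩

end Transversal

namespace IsRightTransversal

variable {M N : Type*} [Monoid M] [Monoid N] {ι : N →* M} {T : Set M}
  (hT : IsRightTransversal ι T)

noncomputable def decomp : M ≃ T × N := (Equiv.ofBijective _ hT.bijective).symm

theorem decomp_spec (g : M) : ((hT.decomp g).1 : M) * ι (hT.decomp g).2 = g :=
  (Equiv.ofBijective _ hT.bijective).apply_symm_apply g

theorem decomp_mul_map_of_mem {t : M} (ht : t ∈ T) (n : N) :
    hT.decomp (t * ι n) = (⟨t, ht⟩, n) :=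
  (Equiv.ofBijective _ hT.bijective).symm_apply_apply (⟨t, ht⟩, n)

theorem decomp_of_mem {t : M} (ht : t ∈ T) : hT.decomp t = (⟨t, ht⟩, 1) := by
  simpa using hT.decomp_mul_map_of_mem ht 1

theorem decomp_map (n : N) : hT.decomp (ι n) = (⟨1, hT.one_mem⟩, n) := by
  simpa using hT.decomp_mul_map_of_mem hT.one_mem n

theorem decomp_mul_map (g : M) (n : N) :
    hT.decomp (g * ι n) = ((hT.decomp g).1, (hT.decomp g).2 * n) := by
  conv_lhs => rw [← hT.decomp_spec g, mul_assoc, ← map_mul]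
  exact hT.decomp_mul_map_of_mem (hT.decomp g).1.2 _

theorem decomp_mul (a c : M) :
    hT.decomp (a * c) = ((hT.decomp (a * (hT.decomp c).1)).1,
      (hT.decomp (a * (hT.decomp c).1)).2 * (hT.decomp c).2) := by
  rw [← hT.decomp_mul_map, mul_assoc, hT.decomp_spec]

theorem decomp_mul_fst_ne_one (hs : IsSpecial (MonoidHom.mrange ι)) {t : M} (ht : t ∈ T)
    (ht1 : t ≠ 1) (x : M) : ((hT.decomp (x * t)).1 : M) ≠ 1 := by
  intro h
  have hxt := hT.decomp_spec (x * t)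
  rw [h, one_mul] at hxt
  obtain ⟨n, rfl⟩ := (hs x t ⟨_, hxt⟩).2
  exact ht1 (congrArg (fun p => (p.1 : M)) ((hT.decomp_of_mem ht).symm.trans (hT.decomp_map n)))

end IsRightTransversal

section NormalWord

variable {M₁ M₂ : Type*}

open Classical in
noncomputable def consInl [One M₁] (t : M₁) (l : List (M₁ ⊕ M₂)) : List (M₁ ⊕ M₂) :=
  if t = 1 then l else .inl t :: l

open Classical in
noncomputable def consInr [One M₂] (t : M₂) (l : List (M₁ ⊕ M₂)) : List (M₁ ⊕ M₂) :=
  if t = 1 then l else .inr t :: l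

@[simp]
theorem consInl_one [One M₁] (l : List (M₁ ⊕ M₂)) : consInl (1 : M₁) l = l := if_pos rfl

@[simp]
theorem consInr_one [One M₂] (l : List (M₁ ⊕ M₂)) : consInr (1 : M₂) l = l := if_pos rfl

theorem consInl_of_ne_one [One M₁] {t : M₁} (ht : t ≠ 1) (l : List (M₁ ⊕ M₂)) :
    consInl t l = .inl t :: l := if_neg ht

theorem consInr_of_ne_one [One M₂] {t : M₂} (ht : t ≠ 1) (l : List (M₁ ⊕ M₂)) :
    consInr t l = .inr t :: l := if_neg ht

variable [Monoid M₁] [Monoid M₂] {T₁ : Set M₁} {T₂ : Set M₂}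

def IsNormalWord (T₁ : Set M₁) (T₂ : Set M₂) (l : List (M₁ ⊕ M₂)) : Prop :=
  (∀ x ∈ l, Sum.elim (fun a : M₁ => a ∈ T₁ ∧ a ≠ 1) (fun b : M₂ => b ∈ T₂ ∧ b ≠ 1) x) ∧
    l.IsChain fun x y => x.isLeft ≠ y.isLeft

variable (T₁ T₂) in
abbrev NormalForm (N : Type*) := {p : List (M₁ ⊕ M₂) × N // IsNormalWord T₁ T₂ p.1}

@[simp]
theorem isNormalWord_nil : IsNormalWord T₁ T₂ ([] : List (M₁ ⊕ M₂)) := by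
  simp [IsNormalWord]

theorem isNormalWord_cons_inl {t : M₁} {l : List (M₁ ⊕ M₂)} :
    IsNormalWord T₁ T₂ (.inl t :: l) ↔
      (t ∈ T₁ ∧ t ≠ 1) ∧ (∀ x ∈ l.head?, x.isRight) ∧ IsNormalWord T₁ T₂ l := by
  rcases l with _ | ⟨x | x, l⟩ <;> simp [IsNormalWord, and_assoc]

theorem isNormalWord_cons_inr {t : M₂} {l : List (M₁ ⊕ M₂)} :
    IsNormalWord T₁ T₂ (.inr t :: l) ↔
      (t ∈ T₂ ∧ t ≠ 1) ∧ (∀ x ∈ l.head?, x.isLeft) ∧ IsNormalWord T₁ T₂ l := by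
  rcases l with _ | ⟨x | x, l⟩ <;> simp [IsNormalWord, and_assoc]

theorem isNormalWord_consInl {t : M₁} (ht : t ∈ T₁) {l : List (M₁ ⊕ M₂)}
    (hl : IsNormalWord T₁ T₂ l) (hhead : ∀ x ∈ l.head?, x.isRight) :
    IsNormalWord T₁ T₂ (consInl t l) := by
  by_cases ht1 : t = 1
  · rwa [ht1, consInl_one]
  · rw [consInl_of_ne_one ht1, isNormalWord_cons_inl]
    exact ⟨⟨ht, ht1⟩, hhead, hl⟩

theorem isNormalWord_consInr {t : M₂} (ht : t ∈ T₂) {l : List (M₁ ⊕ M₂)}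
    (hl : IsNormalWord T₁ T₂ l) (hhead : ∀ x ∈ l.head?, x.isLeft) :
    IsNormalWord T₁ T₂ (consInr t l) := by
  by_cases ht1 : t = 1
  · rwa [ht1, consInr_one]
  · rw [consInr_of_ne_one ht1, isNormalWord_cons_inr]
    exact ⟨⟨ht, ht1⟩, hhead, hl⟩

theorem IsNormalWord.induction {C₁ C₂ : List (M₁ ⊕ M₂) → Prop} (hT₁ : (1 : M₁) ∈ T₁)
    (hT₂ : (1 : M₂) ∈ T₂) (nil : C₁ [])
    (cons_inl : ∀ t ∈ T₁, ∀ r, IsNormalWord T₁ T₂ r → (∀ x ∈ r.head?, x.isRight) → C₂ r →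
      C₁ (consInl t r))
    (cons_inr : ∀ t ∈ T₂, ∀ r, IsNormalWord T₁ T₂ r → (∀ x ∈ r.head?, x.isLeft) → C₁ r →
      C₂ (consInr t r))
    {l : List (M₁ ⊕ M₂)} (hl : IsNormalWord T₁ T₂ l) : C₁ l ∧ C₂ l := by
  induction l with
  | nil => exact ⟨nil, by simpa using cons_inr 1 hT₂ [] isNormalWord_nil (by simp) nil⟩
  | cons x r ih =>
    rcases x with u | u
    · obtain ⟨⟨hu, hu1⟩, hhead, hr⟩ := isNormalWord_cons_inl.1 hl
      have hC₁ : C₁ (.inl u :: r) := by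
        simpa [consInl_of_ne_one hu1] using cons_inl u hu r hr hhead (ih hr).2
      exact ⟨hC₁, by simpa using cons_inr 1 hT₂ _ hl (by simp) hC₁⟩
    · obtain ⟨⟨hu, hu1⟩, hhead, hr⟩ := isNormalWord_cons_inr.1 hl
      have hC₂ : C₂ (.inr u :: r) := by
        simpa [consInr_of_ne_one hu1] using cons_inr u hu r hr hhead (ih hr).1
      exact ⟨by simpa using cons_inl 1 hT₁ _ hl (by simp) hC₂, hC₂⟩

end NormalWord

section AmalgamProd

variable {M₁ M₂ N : Type*} [Monoid M₁] [Monoid M₂] [Monoid N] (ι₁ : N →* M₁) (ι₂ : N →* M₂)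

theorem amalgamInl_apply_eq_amalgamInr (k : N) :
    amalgamInl ι₁ ι₂ (ι₁ k) = amalgamInr ι₁ ι₂ (ι₂ k) :=
  (Con.eq _).2 (ConGen.Rel.of _ _ ⟨k, rfl, rfl⟩)

theorem amalgam_induction_on {C : Amalgam ι₁ ι₂ → Prop} (g : Amalgam ι₁ ι₂)
    (inl : ∀ m, C (amalgamInl ι₁ ι₂ m)) (inr : ∀ m, C (amalgamInr ι₁ ι₂ m))
    (mul : ∀ x y, C x → C y → C (x * y)) : C g := by
  obtain ⟨w, rfl⟩ := (amalgamCon ι₁ ι₂).mk'_surjective g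
  induction w using Monoid.Coprod.induction_on with
  | inl m => exact inl m
  | inr m => exact inr m
  | mul x y hx hy => exact mul _ _ hx hy

variable {ι₁ ι₂} {P : Type*} [Monoid P]

def amalgamLift (f₁ : M₁ →* P) (f₂ : M₂ →* P) (h : ∀ k, f₁ (ι₁ k) = f₂ (ι₂ k)) :
    Amalgam ι₁ ι₂ →* P :=
  (amalgamCon ι₁ ι₂).lift (Monoid.Coprod.lift f₁ f₂) <| Con.conGen_le.2 <| by
    rintro _ _ ⟨k, rfl, rfl⟩
    simp [h]

@[simp]
theorem amalgamLift_amalgamInl (f₁ : M₁ →* P) (f₂ : M₂ →* P) (h : ∀ k, f₁ (ι₁ k) = f₂ (ι₂ k))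
    (m : M₁) : amalgamLift f₁ f₂ h (amalgamInl ι₁ ι₂ m) = f₁ m :=
  (Con.lift_mk' _ _).trans (Monoid.Coprod.lift_apply_inl f₁ f₂ m)

@[simp]
theorem amalgamLift_amalgamInr (f₁ : M₁ →* P) (f₂ : M₂ →* P) (h : ∀ k, f₁ (ι₁ k) = f₂ (ι₂ k))
    (m : M₂) : amalgamLift f₁ f₂ h (amalgamInr ι₁ ι₂ m) = f₂ m :=
  (Con.lift_mk' _ _).trans (Monoid.Coprod.lift_apply_inr f₁ f₂ m)

variable (ι₁ ι₂)

def amalgamProd (p : List (M₁ ⊕ M₂) × N) : Amalgam ι₁ ι₂ :=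
  (p.1.map (Sum.elim (amalgamInl ι₁ ι₂) (amalgamInr ι₁ ι₂))).prod * amalgamInl ι₁ ι₂ (ι₁ p.2)

@[simp]
theorem amalgamProd_nil (h : N) : amalgamProd ι₁ ι₂ ([], h) = amalgamInl ι₁ ι₂ (ι₁ h) := by
  simp [amalgamProd]

theorem amalgamProd_cons (x : M₁ ⊕ M₂) (l : List (M₁ ⊕ M₂)) (h : N) :
    amalgamProd ι₁ ι₂ (x :: l, h) =
      Sum.elim (amalgamInl ι₁ ι₂) (amalgamInr ι₁ ι₂) x * amalgamProd ι₁ ι₂ (l, h) := by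
  simp [amalgamProd, mul_assoc]

theorem amalgamProd_consInl (t : M₁) (l : List (M₁ ⊕ M₂)) (h : N) :
    amalgamProd ι₁ ι₂ (consInl t l, h) = amalgamInl ι₁ ι₂ t * amalgamProd ι₁ ι₂ (l, h) := by
  by_cases ht : t = 1
  · simp [ht]
  · simp [consInl_of_ne_one ht, amalgamProd_cons]

theorem amalgamProd_consInr (t : M₂) (l : List (M₁ ⊕ M₂)) (h : N) :
    amalgamProd ι₁ ι₂ (consInr t l, h) = amalgamInr ι₁ ι₂ t * amalgamProd ι₁ ι₂ (l, h) := by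
  by_cases ht : t = 1
  · simp [ht]
  · simp [consInr_of_ne_one ht, amalgamProd_cons]

end AmalgamProd

section WordAction

variable {M₁ M₂ N : Type*} [Monoid M₁] [Monoid M₂] [Monoid N] {ι₁ : N →* M₁} {ι₂ : N →* M₂}
  {T₁ : Set M₁} {T₂ : Set M₂} (h₁ : IsRightTransversal ι₁ T₁) (h₂ : IsRightTransversal ι₂ T₂)

/-- A letter `a ∈ M₁` meets the leading `M₁`-letter `t` of the word (`t = 1` if there is none),
`a * t = t' * ι₁ n` is decomposed, `t'` stays in front and `ι₂ n` acts on the rest. When the word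
starts in `M₂` this step does not shorten it; the second component of the termination measure
accounts for that. -/
noncomputable def wordAct : M₁ ⊕ M₂ → List (M₁ ⊕ M₂) × N → List (M₁ ⊕ M₂) × N
  | .inl a, ([], h) => (consInl (h₁.decomp (a * ι₁ h)).1.1 [], (h₁.decomp (a * ι₁ h)).2)
  | .inr b, ([], h) => (consInr (h₂.decomp (b * ι₂ h)).1.1 [], (h₂.decomp (b * ι₂ h)).2)
  | .inl a, (.inl t :: r, h) =>
    (wordAct (.inr (ι₂ (h₁.decomp (a * t)).2)) (r, h)).map (consInl (h₁.decomp (a * t)).1.1) id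
  | .inr b, (.inr t :: r, h) =>
    (wordAct (.inl (ι₁ (h₂.decomp (b * t)).2)) (r, h)).map (consInr (h₂.decomp (b * t)).1.1) id
  | .inl a, (.inr t :: r, h) =>
    (wordAct (.inr (ι₂ (h₁.decomp a).2)) (.inr t :: r, h)).map (consInl (h₁.decomp a).1.1) id
  | .inr b, (.inl t :: r, h) =>
    (wordAct (.inl (ι₁ (h₂.decomp b).2)) (.inl t :: r, h)).map (consInr (h₂.decomp b).1.1) id
termination_by x p => (p.1.length, if p.1.head?.map Sum.isLeft = some !x.isLeft then 1 else 0)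

theorem wordAct_inl_map_nil (n h : N) : wordAct h₁ h₂ (.inl (ι₁ n)) ([], h) = ([], n * h) := by
  rw [wordAct, ← map_mul, h₁.decomp_map, consInl_one]

theorem wordAct_inr_map_nil (n h : N) : wordAct h₁ h₂ (.inr (ι₂ n)) ([], h) = ([], n * h) := by
  rw [wordAct, ← map_mul, h₂.decomp_map, consInr_one]

theorem wordAct_inl_consInl (a t : M₁) (p : List (M₁ ⊕ M₂) × N)
    (hp : ∀ x ∈ p.1.head?, x.isRight) :
    wordAct h₁ h₂ (.inl a) (consInl t p.1, p.2) =
      (consInl (h₁.decomp (a * t)).1.1 (wordAct h₁ h₂ (.inr (ι₂ (h₁.decomp (a * t)).2)) p).1,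
        (wordAct h₁ h₂ (.inr (ι₂ (h₁.decomp (a * t)).2)) p).2) := by
  obtain ⟨l, h⟩ := p
  by_cases ht : t = 1
  · subst ht
    rcases l with _ | ⟨x | x, r⟩
    · conv_lhs => rw [consInl_one, wordAct]
      rw [wordAct_inr_map_nil, mul_one, h₁.decomp_mul_map]
    · simp at hp
    · conv_lhs => rw [consInl_one, wordAct]
      rw [mul_one]
      rfl
  · conv_lhs => rw [consInl_of_ne_one ht, wordAct]
    rfl

theorem wordAct_inr_consInr (b t : M₂) (p : List (M₁ ⊕ M₂) × N)
    (hp : ∀ x ∈ p.1.head?, x.isLeft) :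
    wordAct h₁ h₂ (.inr b) (consInr t p.1, p.2) =
      (consInr (h₂.decomp (b * t)).1.1 (wordAct h₁ h₂ (.inl (ι₁ (h₂.decomp (b * t)).2)) p).1,
        (wordAct h₁ h₂ (.inl (ι₁ (h₂.decomp (b * t)).2)) p).2) := by
  obtain ⟨l, h⟩ := p
  by_cases ht : t = 1
  · subst ht
    rcases l with _ | ⟨x | x, r⟩
    · conv_lhs => rw [consInr_one, wordAct]
      rw [wordAct_inl_map_nil, mul_one, h₂.decomp_mul_map]
    · conv_lhs => rw [consInr_one, wordAct]
      rw [mul_one]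
      rfl
    · simp at hp
  · conv_lhs => rw [consInr_of_ne_one ht, wordAct]
    rfl

theorem isLeft_head_wordAct_inl_map (hs₁ : IsSpecial (MonoidHom.mrange ι₁)) (n : N)
    {p : List (M₁ ⊕ M₂) × N} (hp : IsNormalWord T₁ T₂ p.1)
    (hhead : ∀ x ∈ p.1.head?, x.isLeft) :
    ∀ x ∈ (wordAct h₁ h₂ (.inl (ι₁ n)) p).1.head?, x.isLeft := by
  obtain ⟨_ | ⟨u | u, r⟩, h⟩ := p
  · simp [wordAct_inl_map_nil]
  · obtain ⟨⟨hu, hu1⟩, hrhead, -⟩ := isNormalWord_cons_inl.1 hp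
    have := wordAct_inl_consInl h₁ h₂ (ι₁ n) u (r, h) hrhead
    rw [consInl_of_ne_one hu1] at this
    simp [this, consInl_of_ne_one (h₁.decomp_mul_fst_ne_one hs₁ hu hu1 _)]
  · simp at hhead

theorem isRight_head_wordAct_inr_map (hs₂ : IsSpecial (MonoidHom.mrange ι₂)) (n : N)
    {p : List (M₁ ⊕ M₂) × N} (hp : IsNormalWord T₁ T₂ p.1)
    (hhead : ∀ x ∈ p.1.head?, x.isRight) :
    ∀ x ∈ (wordAct h₁ h₂ (.inr (ι₂ n)) p).1.head?, x.isRight := by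
  obtain ⟨_ | ⟨u | u, r⟩, h⟩ := p
  · simp [wordAct_inr_map_nil]
  · simp at hhead
  · obtain ⟨⟨hu, hu1⟩, hrhead, -⟩ := isNormalWord_cons_inr.1 hp
    have := wordAct_inr_consInr h₁ h₂ (ι₂ n) u (r, h) hrhead
    rw [consInr_of_ne_one hu1] at this
    simp [this, consInr_of_ne_one (h₂.decomp_mul_fst_ne_one hs₂ hu hu1 _)]

theorem isNormalWord_wordAct (hs₁ : IsSpecial (MonoidHom.mrange ι₁))
    (hs₂ : IsSpecial (MonoidHom.mrange ι₂)) {l : List (M₁ ⊕ M₂)} (hl : IsNormalWord T₁ T₂ l)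
    (h : N) (x : M₁ ⊕ M₂) : IsNormalWord T₁ T₂ (wordAct h₁ h₂ x (l, h)).1 := by
  suffices H : (∀ a h, IsNormalWord T₁ T₂ (wordAct h₁ h₂ (.inl a) (l, h)).1) ∧
      ∀ b h, IsNormalWord T₁ T₂ (wordAct h₁ h₂ (.inr b) (l, h)).1 by
    rcases x with a | b
    exacts [H.1 a h, H.2 b h]
  apply IsNormalWord.induction h₁.one_mem h₂.one_mem ?_ ?_ ?_ hl
  · intro a h
    rw [wordAct]
    exact isNormalWord_consInl (h₁.decomp _).1.2 isNormalWord_nil (by simp)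
  · intro t _ r hr hhead ih a h
    rw [wordAct_inl_consInl h₁ h₂ a t (r, h) hhead]
    exact isNormalWord_consInl (h₁.decomp _).1.2 (ih _ h)
      (isRight_head_wordAct_inr_map h₁ h₂ hs₂ _ hr hhead)
  · intro t _ r hr hhead ih b h
    rw [wordAct_inr_consInr h₁ h₂ b t (r, h) hhead]
    exact isNormalWord_consInr (h₂.decomp _).1.2 (ih _ h)
      (isLeft_head_wordAct_inl_map h₁ h₂ hs₁ _ hr hhead)

theorem wordAct_one {l : List (M₁ ⊕ M₂)} (hl : IsNormalWord T₁ T₂ l) :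
    (∀ h, wordAct h₁ h₂ (.inl 1) (l, h) = (l, h)) ∧
      ∀ h, wordAct h₁ h₂ (.inr 1) (l, h) = (l, h) := by
  apply IsNormalWord.induction h₁.one_mem h₂.one_mem ?_ ?_ ?_ hl
  · intro h
    rw [← map_one ι₁, wordAct_inl_map_nil, one_mul]
  · intro t ht r _ hhead ih h
    rw [wordAct_inl_consInl h₁ h₂ 1 t (r, h) hhead, one_mul, h₁.decomp_of_mem ht, map_one, ih]
  · intro t ht r _ hhead ih h
    rw [wordAct_inr_consInr h₁ h₂ 1 t (r, h) hhead, one_mul, h₂.decomp_of_mem ht, map_one, ih]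

theorem wordAct_inl_mul_consInl (hs₂ : IsSpecial (MonoidHom.mrange ι₂)) {r : List (M₁ ⊕ M₂)}
    (hr : IsNormalWord T₁ T₂ r) (hhead : ∀ x ∈ r.head?, x.isRight)
    (ih : ∀ n m h, wordAct h₁ h₂ (.inr (ι₂ n)) (wordAct h₁ h₂ (.inr (ι₂ m)) (r, h)) =
      wordAct h₁ h₂ (.inr (ι₂ (n * m))) (r, h)) (t a b : M₁) (h : N) :
    wordAct h₁ h₂ (.inl a) (wordAct h₁ h₂ (.inl b) (consInl t r, h)) =
      wordAct h₁ h₂ (.inl (a * b)) (consInl t r, h) := by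
  rw [wordAct_inl_consInl h₁ h₂ b t (r, h) hhead,
    wordAct_inl_consInl h₁ h₂ a _ _ (isRight_head_wordAct_inr_map h₁ h₂ hs₂ _ hr hhead), ih,
    wordAct_inl_consInl h₁ h₂ (a * b) t (r, h) hhead, mul_assoc, h₁.decomp_mul a (b * t)]

theorem wordAct_inr_mul_consInr (hs₁ : IsSpecial (MonoidHom.mrange ι₁)) {r : List (M₁ ⊕ M₂)}
    (hr : IsNormalWord T₁ T₂ r) (hhead : ∀ x ∈ r.head?, x.isLeft)
    (ih : ∀ n m h, wordAct h₁ h₂ (.inl (ι₁ n)) (wordAct h₁ h₂ (.inl (ι₁ m)) (r, h)) =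
      wordAct h₁ h₂ (.inl (ι₁ (n * m))) (r, h)) (t a b : M₂) (h : N) :
    wordAct h₁ h₂ (.inr a) (wordAct h₁ h₂ (.inr b) (consInr t r, h)) =
      wordAct h₁ h₂ (.inr (a * b)) (consInr t r, h) := by
  rw [wordAct_inr_consInr h₁ h₂ b t (r, h) hhead,
    wordAct_inr_consInr h₁ h₂ a _ _ (isLeft_head_wordAct_inl_map h₁ h₂ hs₁ _ hr hhead), ih,
    wordAct_inr_consInr h₁ h₂ (a * b) t (r, h) hhead, mul_assoc, h₂.decomp_mul a (b * t)]

theorem wordAct_mul (hs₁ : IsSpecial (MonoidHom.mrange ι₁))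
    (hs₂ : IsSpecial (MonoidHom.mrange ι₂)) {l : List (M₁ ⊕ M₂)} (hl : IsNormalWord T₁ T₂ l) :
    (∀ a b h, wordAct h₁ h₂ (.inl a) (wordAct h₁ h₂ (.inl b) (l, h)) =
        wordAct h₁ h₂ (.inl (a * b)) (l, h)) ∧
      ∀ a b h, wordAct h₁ h₂ (.inr a) (wordAct h₁ h₂ (.inr b) (l, h)) =
        wordAct h₁ h₂ (.inr (a * b)) (l, h) := by
  apply IsNormalWord.induction h₁.one_mem h₂.one_mem ?_ ?_ ?_ hl
  · simpa using wordAct_inl_mul_consInl h₁ h₂ hs₂ isNormalWord_nil (by simp)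
      (fun n m h => by simp only [wordAct_inr_map_nil, mul_assoc]) 1
  · intro t _ r hr hhead ih
    exact wordAct_inl_mul_consInl h₁ h₂ hs₂ hr hhead (fun n m h => by rw [ih, map_mul]) t
  · intro t _ r hr hhead ih
    exact wordAct_inr_mul_consInr h₁ h₂ hs₁ hr hhead (fun n m h => by rw [ih, map_mul]) t

theorem wordAct_inl_map_eq_wordAct_inr_map (k : N) (p : List (M₁ ⊕ M₂) × N) :
    wordAct h₁ h₂ (.inl (ι₁ k)) p = wordAct h₁ h₂ (.inr (ι₂ k)) p := by
  obtain ⟨_ | ⟨u | u, r⟩, h⟩ := p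
  · rw [wordAct_inl_map_nil, wordAct_inr_map_nil]
  · simpa [h₂.decomp_map] using
      (wordAct_inr_consInr h₁ h₂ (ι₂ k) 1 (.inl u :: r, h) (by simp)).symm
  · simpa [h₁.decomp_map] using wordAct_inl_consInl h₁ h₂ (ι₁ k) 1 (.inr u :: r, h) (by simp)

theorem amalgamProd_wordAct {l : List (M₁ ⊕ M₂)} (hl : IsNormalWord T₁ T₂ l) (h : N)
    (x : M₁ ⊕ M₂) : amalgamProd ι₁ ι₂ (wordAct h₁ h₂ x (l, h)) =
      Sum.elim (amalgamInl ι₁ ι₂) (amalgamInr ι₁ ι₂) x * amalgamProd ι₁ ι₂ (l, h) := by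
  suffices H : (∀ a h, amalgamProd ι₁ ι₂ (wordAct h₁ h₂ (.inl a) (l, h)) =
      amalgamInl ι₁ ι₂ a * amalgamProd ι₁ ι₂ (l, h)) ∧
      ∀ b h, amalgamProd ι₁ ι₂ (wordAct h₁ h₂ (.inr b) (l, h)) =
        amalgamInr ι₁ ι₂ b * amalgamProd ι₁ ι₂ (l, h) by
    rcases x with a | b
    exacts [H.1 a h, H.2 b h]
  apply IsNormalWord.induction h₁.one_mem h₂.one_mem ?_ ?_ ?_ hl
  · intro a h
    rw [wordAct, amalgamProd_consInl, amalgamProd_nil, amalgamProd_nil, ← map_mul, h₁.decomp_spec,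
      map_mul]
  · intro t _ r _ hhead ih a h
    rw [wordAct_inl_consInl h₁ h₂ a t (r, h) hhead, amalgamProd_consInl, ih,
      ← amalgamInl_apply_eq_amalgamInr, ← mul_assoc, ← map_mul, h₁.decomp_spec,
      amalgamProd_consInl, map_mul, mul_assoc]
  · intro t _ r _ hhead ih b h
    rw [wordAct_inr_consInr h₁ h₂ b t (r, h) hhead, amalgamProd_consInr, ih,
      amalgamInl_apply_eq_amalgamInr, ← mul_assoc, ← map_mul, h₂.decomp_spec,
      amalgamProd_consInr, map_mul, mul_assoc]

theorem wordAct_of_isNormalWord_cons {x : M₁ ⊕ M₂} {r : List (M₁ ⊕ M₂)}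
    (hl : IsNormalWord T₁ T₂ (x :: r)) (h : N) : wordAct h₁ h₂ x (r, h) = (x :: r, h) := by
  rcases x with u | u
  · obtain ⟨⟨hu, hu1⟩, hhead, hr⟩ := isNormalWord_cons_inl.1 hl
    simpa [h₁.decomp_of_mem hu, (wordAct_one h₁ h₂ hr).2, consInl_of_ne_one hu1] using
      wordAct_inl_consInl h₁ h₂ u 1 (r, h) hhead
  · obtain ⟨⟨hu, hu1⟩, hhead, hr⟩ := isNormalWord_cons_inr.1 hl
    simpa [h₂.decomp_of_mem hu, (wordAct_one h₁ h₂ hr).1, consInr_of_ne_one hu1] using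
      wordAct_inr_consInr h₁ h₂ u 1 (r, h) hhead

noncomputable def wordActInl (hs₁ : IsSpecial (MonoidHom.mrange ι₁))
    (hs₂ : IsSpecial (MonoidHom.mrange ι₂)) : M₁ →* Function.End (NormalForm T₁ T₂ N) where
  toFun a p := ⟨wordAct h₁ h₂ (.inl a) p.1, isNormalWord_wordAct h₁ h₂ hs₁ hs₂ p.2 _ _⟩
  map_one' := funext fun p => Subtype.ext ((wordAct_one h₁ h₂ p.2).1 _)
  map_mul' a b := funext fun p => Subtype.ext ((wordAct_mul h₁ h₂ hs₁ hs₂ p.2).1 a b _).symm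

noncomputable def wordActInr (hs₁ : IsSpecial (MonoidHom.mrange ι₁))
    (hs₂ : IsSpecial (MonoidHom.mrange ι₂)) : M₂ →* Function.End (NormalForm T₁ T₂ N) where
  toFun b p := ⟨wordAct h₁ h₂ (.inr b) p.1, isNormalWord_wordAct h₁ h₂ hs₁ hs₂ p.2 _ _⟩
  map_one' := funext fun p => Subtype.ext ((wordAct_one h₁ h₂ p.2).2 _)
  map_mul' a b := funext fun p => Subtype.ext ((wordAct_mul h₁ h₂ hs₁ hs₂ p.2).2 a b _).symm

noncomputable def amalgamAct (hs₁ : IsSpecial (MonoidHom.mrange ι₁))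
    (hs₂ : IsSpecial (MonoidHom.mrange ι₂)) :
    Amalgam ι₁ ι₂ →* Function.End (NormalForm T₁ T₂ N) :=
  amalgamLift (wordActInl h₁ h₂ hs₁ hs₂) (wordActInr h₁ h₂ hs₁ hs₂) fun k =>
    funext fun p => Subtype.ext (wordAct_inl_map_eq_wordAct_inr_map h₁ h₂ k p.1)

variable (hs₁ : IsSpecial (MonoidHom.mrange ι₁)) (hs₂ : IsSpecial (MonoidHom.mrange ι₂))

theorem amalgamProd_amalgamAct (g : Amalgam ι₁ ι₂) (p : NormalForm T₁ T₂ N) :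
    amalgamProd ι₁ ι₂ (amalgamAct h₁ h₂ hs₁ hs₂ g p).1 = g * amalgamProd ι₁ ι₂ p.1 := by
  induction g using amalgam_induction_on generalizing p with
  | inl m => exact amalgamProd_wordAct h₁ h₂ p.2 _ (.inl m)
  | inr m => exact amalgamProd_wordAct h₁ h₂ p.2 _ (.inr m)
  | mul x y hx hy => rw [map_mul, mul_assoc, ← hy, ← hx]; rfl

theorem amalgamAct_sumElim (x : M₁ ⊕ M₂) (p : NormalForm T₁ T₂ N) :
    (amalgamAct h₁ h₂ hs₁ hs₂ (Sum.elim (amalgamInl ι₁ ι₂) (amalgamInr ι₁ ι₂) x) p).1 =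
      wordAct h₁ h₂ x p.1 := by
  rcases x with a | b
  · exact congrArg (fun f : Function.End _ => (f p).1) (amalgamLift_amalgamInl _ _ _ a)
  · exact congrArg (fun f : Function.End _ => (f p).1) (amalgamLift_amalgamInr _ _ _ b)

theorem amalgamAct_amalgamProd (p : NormalForm T₁ T₂ N) :
    (amalgamAct h₁ h₂ hs₁ hs₂ (amalgamProd ι₁ ι₂ p.1) ⟨([], 1), isNormalWord_nil⟩).1 = p.1 := by
  obtain ⟨⟨l, h⟩, hl⟩ := p
  induction l with
  | nil =>
    rw [amalgamProd_nil]
    exact (amalgamAct_sumElim h₁ h₂ hs₁ hs₂ (.inl (ι₁ h)) _).trans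
      (by rw [wordAct_inl_map_nil, mul_one])
  | cons x r ih =>
    have hr : IsNormalWord T₁ T₂ r := ⟨fun y hy => hl.1 y (List.mem_cons_of_mem x hy), hl.2.tail⟩
    calc _ = wordAct h₁ h₂ x (amalgamAct h₁ h₂ hs₁ hs₂ (amalgamProd ι₁ ι₂ (r, h))
          ⟨([], 1), isNormalWord_nil⟩).1 := by
          rw [amalgamProd_cons, map_mul]; exact amalgamAct_sumElim h₁ h₂ hs₁ hs₂ x _
      _ = (x :: r, h) := by rw [ih hr, wordAct_of_isNormalWord_cons h₁ h₂ hl]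

end WordAction

theorem existsUnique_isNormalWord_amalgamProd {M₁ M₂ N : Type*} [Monoid M₁] [Monoid M₂]
    [Monoid N] {ι₁ : N →* M₁} {ι₂ : N →* M₂} {T₁ : Set M₁} {T₂ : Set M₂}
    (h₁ : IsRightTransversal ι₁ T₁) (h₂ : IsRightTransversal ι₂ T₂)
    (hs₁ : IsSpecial (MonoidHom.mrange ι₁)) (hs₂ : IsSpecial (MonoidHom.mrange ι₂))
    (g : Amalgam ι₁ ι₂) :
    ∃! p : List (M₁ ⊕ M₂) × N, IsNormalWord T₁ T₂ p.1 ∧ g = amalgamProd ι₁ ι₂ p := by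
  let e : NormalForm T₁ T₂ N := ⟨([], 1), isNormalWord_nil⟩
  refine ⟨(amalgamAct h₁ h₂ hs₁ hs₂ g e).1, ⟨(amalgamAct h₁ h₂ hs₁ hs₂ g e).2, ?_⟩, ?_⟩
  · rw [amalgamProd_amalgamAct, amalgamProd_nil, map_one, map_one, mul_one]
  · rintro p ⟨hp, rfl⟩
    exact (amalgamAct_amalgamProd h₁ h₂ hs₁ hs₂ ⟨p, hp⟩).symm

/-- **Proposition 3.3.** In a special amalgam `M₁ *_N M₂` with `M₁, M₂` cancellative and
`N` having the confluence property in both, given transversals `T₁, T₂` (containing `1`)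
of the minimal `R_N`-classes, every element has a unique amalgam decomposition
`g = g₁ ⋯ g_m h` with `h ∈ N`, each `g_i` in `T₁ \ {1}` or `T₂ \ {1}`, and no two
consecutive `g_i` from the same transversal. -/
theorem proposition_3_3 {M₁ M₂ N : Type*} [Monoid M₁] [Monoid M₂] [Monoid N]
    (ι₁ : N →* M₁) (ι₂ : N →* M₂)
    (hι₁ : Function.Injective ι₁) (hι₂ : Function.Injective ι₂)
    (hs₁ : IsSpecial (MonoidHom.mrange ι₁)) (hs₂ : IsSpecial (MonoidHom.mrange ι₂))
    (hc₁ : IsCancellative M₁) (hc₂ : IsCancellative M₂)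
    (hconf₁ : Confluence (MonoidHom.mrange ι₁)) (hconf₂ : Confluence (MonoidHom.mrange ι₂))
    (T₁ : Set M₁) (T₂ : Set M₂)
    (hT₁ : (1 : M₁) ∈ T₁ ∧
      (∀ t ∈ T₁, IsMinimalRCoset (MonoidHom.mrange ι₁) (RCoset (MonoidHom.mrange ι₁) t)) ∧
      ∀ C : Set M₁, IsMinimalRCoset (MonoidHom.mrange ι₁) C →
        ∃! t : M₁, t ∈ T₁ ∧ RCoset (MonoidHom.mrange ι₁) t = C)
    (hT₂ : (1 : M₂) ∈ T₂ ∧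
      (∀ t ∈ T₂, IsMinimalRCoset (MonoidHom.mrange ι₂) (RCoset (MonoidHom.mrange ι₂) t)) ∧
      ∀ C : Set M₂, IsMinimalRCoset (MonoidHom.mrange ι₂) C →
        ∃! t : M₂, t ∈ T₂ ∧ RCoset (MonoidHom.mrange ι₂) t = C) :
    ∀ g : Amalgam ι₁ ι₂, ∃! p : List (M₁ ⊕ M₂) × N,
      (∀ x ∈ p.1, Sum.elim (fun a : M₁ => a ∈ T₁ ∧ a ≠ 1) (fun b : M₂ => b ∈ T₂ ∧ b ≠ 1) x) ∧
      List.Chain' (fun x y : M₁ ⊕ M₂ => x.isLeft ≠ y.isLeft) p.1 ∧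
      g = (p.1.map (Sum.elim (amalgamInl ι₁ ι₂) (amalgamInr ι₁ ι₂))).prod *
            amalgamInl ι₁ ι₂ (ι₁ p.2) := by
  intro g
  have h := existsUnique_isNormalWord_amalgamProd
    (isRightTransversal_of_rConfluence hι₁ hc₁ hconf₁.1 hT₁.1 hT₁.2.1 hT₁.2.2)
    (isRightTransversal_of_rConfluence hι₂ hc₂ hconf₂.1 hT₂.1 hT₂.2.1 hT₂.2.2) hs₁ hs₂ g
  simp only [IsNormalWord, and_assoc] at h
  exact h

end PG
end
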